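/- arXiv:2310.00976 — 2 statements merged into one kernel-verified Lean document; each statement's English description precedes it below -/
import Mathlib

section
/- Let I be an instance with n agents and m goods and let γ ≥ 0. If I admits no α-MMS allocation for any α > γ, then there exists an instance I' with n+1 agents and m+1 goods that admits no α-MMS allocation for any α > γ. -/
open scoped BigOperators Classical

/-- An instance of fair division with subjective divisibility: `n` agents and `m` goods,
each good of total amount 1.  Each agent `i` assigns a nonnegative value `v i g` to each
good `g` and regards each good as either divisible or indivisible for her. -/
structure FairDivision (n m : ℕ) where
  /-- agent `i`'s value for good `g` -/
  v : Fin n → Fin m → ℝ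
  v_nonneg : ∀ i g, 0 ≤ v i g
  /-- `divisible i g` means agent `i` regards good `g` as divisible -/
  divisible : Fin n → Fin m → Prop

namespace FairDivision

variable {n m : ℕ}

/-- Agent `i`'s utility from receiving fraction `t ∈ [0,1]` of good `g`:
`t * v i g` if `g` is divisible for `i`; `v i g` if `g` is indivisible for `i` and `t = 1`;
and `0` if `g` is indivisible for `i` and `t < 1`. -/
noncomputable def frUtil (I : FairDivision n m) (i : Fin n) (g : Fin m) (t : ℝ) : ℝ :=
  if I.divisible i g then t * I.v i g else if t = 1 then I.v i g else 0

/-- Agent `i`'s (additive) utility for a bundle `b`, given by the fraction `b g` of each good. -/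
noncomputable def util (I : FairDivision n m) (i : Fin n) (b : Fin m → ℝ) : ℝ :=
  ∑ g, I.frUtil i g (b g)

/-- Agent `i`'s utility for the bundle `b` with good `g` omitted. -/
noncomputable def utilMinus (I : FairDivision n m) (i : Fin n) (b : Fin m → ℝ) (g : Fin m) : ℝ :=
  ∑ g' ∈ Finset.univ.erase g, I.frUtil i g' (b g')

/-- A complete allocation: fractions in `[0,1]` summing to `1` for every good. -/
def IsAllocation (I : FairDivision n m) (x : Fin n → Fin m → ℝ) : Prop :=
  (∀ i g, 0 ≤ x i g ∧ x i g ≤ 1) ∧ ∀ g, ∑ i, x i g = 1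

/-- A partial allocation: fractions in `[0,1]` summing to at most `1` for every good. -/
def IsPartialAllocation (I : FairDivision n m) (x : Fin n → Fin m → ℝ) : Prop :=
  (∀ i g, 0 ≤ x i g ∧ x i g ≤ 1) ∧ ∀ g, ∑ i, x i g ≤ 1

/-- The maximin share of agent `i`: the supremum, over all fractional `n`-partitions
`P` of the goods, of the minimum over the parts `P j` of agent `i`'s utility. -/
noncomputable def MMS (I : FairDivision n m) (i : Fin n) : ℝ :=
  sSup { r : ℝ | ∃ P : Fin n → Fin m → ℝ, I.IsAllocation P ∧ r = ⨅ j, I.util i (P j) }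

/-- Non-wastefulness: every positive fraction an agent receives yields her positive utility. -/
def NonWasteful (I : FairDivision n m) (x : Fin n → Fin m → ℝ) : Prop :=
  ∀ i g, 0 < x i g → 0 < I.frUtil i g (x i g)

/-- Envy-freeness. -/
def EF (I : FairDivision n m) (x : Fin n → Fin m → ℝ) : Prop :=
  ∀ i j, I.util i (x j) ≤ I.util i (x i)

/-- Envy-freeness for mixed goods: for all agents `i, j`, if every good `j` receives a
positive fraction of is indivisible for `i`, then `i` does not envy `j` after removing some
such good from `j`'s bundle; otherwise `i` does not envy `j`. -/
def EFM (I : FairDivision n m) (x : Fin n → Fin m → ℝ) : Prop :=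
  ∀ i j,
    ((∀ g, 0 < x j g → ¬ I.divisible i g) →
      ∃ g, 0 < x j g ∧ I.utilMinus i (x j) g ≤ I.util i (x i)) ∧
    ((¬ ∀ g, 0 < x j g → ¬ I.divisible i g) → I.util i (x j) ≤ I.util i (x i))

/-- EFXM: as EFM, but the envy must vanish after removing any positively valued such good. -/
def EFXM (I : FairDivision n m) (x : Fin n → Fin m → ℝ) : Prop :=
  ∀ i j,
    ((∀ g, 0 < x j g → ¬ I.divisible i g) →
      ∀ g, 0 < x j g → 0 < I.v i g → I.utilMinus i (x j) g ≤ I.util i (x i)) ∧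
    ((¬ ∀ g, 0 < x j g → ¬ I.divisible i g) → I.util i (x j) ≤ I.util i (x i))

/-- EF1M: if `j`'s bundle contains (a positive fraction of) some good that `i` regards as
indivisible and values positively, the envy of `i` must vanish after removing some such good;
otherwise `i` does not envy `j`. -/
def EF1M (I : FairDivision n m) (x : Fin n → Fin m → ℝ) : Prop :=
  ∀ i j,
    ((∃ g, 0 < x j g ∧ ¬ I.divisible i g ∧ 0 < I.v i g) →
      ∃ g, 0 < x j g ∧ ¬ I.divisible i g ∧ 0 < I.v i g ∧
        I.utilMinus i (x j) g ≤ I.util i (x i)) ∧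
    ((¬ ∃ g, 0 < x j g ∧ ¬ I.divisible i g ∧ 0 < I.v i g) → I.util i (x j) ≤ I.util i (x i))

/-- Pareto optimality (among complete allocations). -/
def ParetoOptimal (I : FairDivision n m) (x : Fin n → Fin m → ℝ) : Prop :=
  ¬ ∃ y, I.IsAllocation y ∧ (∀ i, I.util i (x i) ≤ I.util i (y i)) ∧
    ∃ i, I.util i (x i) < I.util i (y i)

/-- In a 3-agent instance, `B` (a set of whole goods) is a reducible bundle with respect to
agent `i`: `u_i(B) ≥ (2/3)·MMS_i`, `u_j(M∖B) ≥ 2·MMS_j` for some agent `j ≠ i`, and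
`u_k(M∖B) ≥ (4/3)·MMS_k` for the remaining agent `k`. -/
def IsReducible (I : FairDivision 3 m) (B : Finset (Fin m)) (i : Fin 3) : Prop :=
  2 / 3 * I.MMS i ≤ ∑ g ∈ B, I.v i g ∧
    ∃ j, j ≠ i ∧ 2 * I.MMS j ≤ ∑ g ∈ Bᶜ, I.v j g ∧
      ∀ k, k ≠ i → k ≠ j → 4 / 3 * I.MMS k ≤ ∑ g ∈ Bᶜ, I.v k g

end FairDivision

namespace FairDivision

variable {n m : ℕ}

theorem frUtil_nonneg' (I : FairDivision n m) (i : Fin n) (g : Fin m) {t : ℝ} (ht : 0 ≤ t) :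
    0 ≤ I.frUtil i g t := by
  unfold frUtil
  split_ifs
  · exact mul_nonneg ht (I.v_nonneg i g)
  · exact I.v_nonneg i g
  · exact le_rfl

theorem frUtil_le_v' (I : FairDivision n m) (i : Fin n) (g : Fin m) {t : ℝ} (ht : t ≤ 1) :
    I.frUtil i g t ≤ I.v i g := by
  unfold frUtil
  split_ifs
  · exact mul_le_of_le_one_left (I.v_nonneg i g) ht
  · exact le_rfl
  · exact I.v_nonneg i g

theorem frUtil_mono' (I : FairDivision n m) (i : Fin n) (g : Fin m) {s t : ℝ}
    (hst : s ≤ t) (ht : t ≤ 1) : I.frUtil i g s ≤ I.frUtil i g t := by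
  unfold frUtil
  split_ifs with h1 h2 h3
  · exact mul_le_mul_of_nonneg_right hst (I.v_nonneg i g)
  · exact le_rfl
  · exact absurd (le_antisymm ht (h2 ▸ hst)) h3
  · exact I.v_nonneg i g
  · exact le_rfl

theorem frUtil_zero' (I : FairDivision n m) (i : Fin n) (g : Fin m) :
    I.frUtil i g 0 = 0 := by
  unfold frUtil
  split_ifs with h1 h2
  · ring
  · exact absurd h2.symm one_ne_zero
  · rfl

theorem util_nonneg' (I : FairDivision n m) (i : Fin n) {b : Fin m → ℝ}
    (hb : ∀ g, 0 ≤ b g) : 0 ≤ I.util i b :=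
  Finset.sum_nonneg fun g _ => I.frUtil_nonneg' i g (hb g)

theorem util_le_total' (I : FairDivision n m) (i : Fin n) {b : Fin m → ℝ}
    (hb : ∀ g, b g ≤ 1) : I.util i b ≤ ∑ g, I.v i g :=
  Finset.sum_le_sum fun g _ => I.frUtil_le_v' i g (hb g)

theorem util_mono' (I : FairDivision n m) (i : Fin n) {a b : Fin m → ℝ}
    (hab : ∀ g, a g ≤ b g) (hb : ∀ g, b g ≤ 1) : I.util i a ≤ I.util i b :=
  Finset.sum_le_sum fun g _ => I.frUtil_mono' i g (hab g) (hb g)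

/-- The trivial allocation giving everything to agent `0`. -/
theorem trivAlloc (I : FairDivision n m) (hk : 0 < n) :
    I.IsAllocation (fun j _ => if j = (⟨0, hk⟩ : Fin n) then (1 : ℝ) else 0) := by
  constructor
  · intro i g
    dsimp only
    split_ifs <;> norm_num
  · intro g
    simp

theorem mms_set_bddAbove (I : FairDivision n m) (hk : 0 < n) (i : Fin n) :
    BddAbove { r : ℝ | ∃ P : Fin n → Fin m → ℝ, I.IsAllocation P ∧ r = ⨅ j, I.util i (P j) } := by
  refine ⟨∑ g, I.v i g, ?_⟩
  rintro r ⟨P, hP, rfl⟩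
  have h1 : (⨅ j, I.util i (P j)) ≤ I.util i (P ⟨0, hk⟩) :=
    ciInf_le (Set.Finite.bddBelow (Set.finite_range _)) _
  exact h1.trans (I.util_le_total' i fun g => (hP.1 _ g).2)

theorem le_mms (I : FairDivision n m) (hk : 0 < n) (i : Fin n) (P : Fin n → Fin m → ℝ)
    (hP : I.IsAllocation P) : (⨅ j, I.util i (P j)) ≤ I.MMS i :=
  le_csSup (I.mms_set_bddAbove hk i) ⟨P, hP, rfl⟩

theorem mms_le (I : FairDivision n m) (hk : 0 < n) (i : Fin n) {c : ℝ}
    (h : ∀ P : Fin n → Fin m → ℝ, I.IsAllocation P → (⨅ j, I.util i (P j)) ≤ c) :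
    I.MMS i ≤ c := by
  refine csSup_le ⟨_, ⟨_, I.trivAlloc hk, rfl⟩⟩ ?_
  rintro r ⟨P, hP, rfl⟩
  exact h P hP

theorem mms_nonneg (I : FairDivision n m) (hk : 0 < n) (i : Fin n) : 0 ≤ I.MMS i := by
  haveI : Nonempty (Fin n) := Fin.pos_iff_nonempty.mp hk
  refine le_trans ?_ (I.le_mms hk i _ (I.trivAlloc hk))
  refine le_ciInf fun j => I.util_nonneg' i fun g => ?_
  split_ifs <;> norm_num

/-- The extended instance: one new good `g*` (indivisible, worth `MMS i` to each old agent
`i`) and one new agent valuing only `g*` (divisible, worth `1`). -/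
noncomputable def extend (I : FairDivision n m) (hn : 0 < n) : FairDivision (n + 1) (m + 1) where
  v := Fin.snoc (fun i => Fin.snoc (I.v i) (I.MMS i)) (Fin.snoc (fun _ => 0) 1)
  v_nonneg := by
    intro j g
    induction j using Fin.lastCases with
    | last =>
      induction g using Fin.lastCases with
      | last => simp
      | cast g => simp
    | cast i =>
      induction g using Fin.lastCases with
      | last => simpa using I.mms_nonneg hn i
      | cast g => simpa using I.v_nonneg i g
  divisible := Fin.snoc (fun i => Fin.snoc (I.divisible i) False) (fun _ => True)

variable (I : FairDivision n m) (hn : 0 < n)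

theorem extend_frUtil_cast_cast (i : Fin n) (g : Fin m) (t : ℝ) :
    (I.extend hn).frUtil i.castSucc g.castSucc t = I.frUtil i g t := by
  simp [extend, frUtil]

theorem extend_frUtil_cast_last (i : Fin n) {t : ℝ} (ht : t ≠ 1) :
    (I.extend hn).frUtil i.castSucc (Fin.last m) t = 0 := by
  simp [extend, frUtil, ht]

theorem extend_frUtil_cast_last_one (i : Fin n) :
    (I.extend hn).frUtil i.castSucc (Fin.last m) 1 = I.MMS i := by
  simp [extend, frUtil]

theorem extend_frUtil_last_cast (g : Fin m) (t : ℝ) :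
    (I.extend hn).frUtil (Fin.last n) g.castSucc t = 0 := by
  simp [extend, frUtil]

theorem extend_frUtil_last_last (t : ℝ) :
    (I.extend hn).frUtil (Fin.last n) (Fin.last m) t = t := by
  simp [extend, frUtil]

theorem extend_util_cast (i : Fin n) (b : Fin (m + 1) → ℝ) (hb : b (Fin.last m) ≠ 1) :
    (I.extend hn).util i.castSucc b = I.util i (fun g => b g.castSucc) := by
  rw [util, Fin.sum_univ_castSucc]
  rw [extend_frUtil_cast_last I hn i hb]
  simp only [extend_frUtil_cast_cast, add_zero]
  rfl

theorem extend_util_cast_one (i : Fin n) (b : Fin (m + 1) → ℝ) (hb : b (Fin.last m) = 1) :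
    (I.extend hn).util i.castSucc b = I.util i (fun g => b g.castSucc) + I.MMS i := by
  rw [util, Fin.sum_univ_castSucc, hb]
  rw [extend_frUtil_cast_last_one I hn i]
  simp only [extend_frUtil_cast_cast]
  rfl

theorem extend_util_last (b : Fin (m + 1) → ℝ) :
    (I.extend hn).util (Fin.last n) b = b (Fin.last m) := by
  rw [util, Fin.sum_univ_castSucc]
  rw [extend_frUtil_last_last I hn]
  simp only [extend_frUtil_last_cast]
  simp

theorem extend_mms_cast (i : Fin n) : I.MMS i ≤ (I.extend hn).MMS i.castSucc := by
  haveI : Nonempty (Fin n) := Fin.pos_iff_nonempty.mp hn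
  refine I.mms_le hn i fun P hP => ?_
  set P' : Fin (n + 1) → Fin (m + 1) → ℝ :=
    Fin.snoc (fun j => Fin.snoc (P j) 0) (Fin.snoc (fun _ => 0) 1) with hP'def
  have hP' : (I.extend hn).IsAllocation P' := by
    constructor
    · intro j g
      induction j using Fin.lastCases with
      | last =>
        induction g using Fin.lastCases with
        | last => simp [P']
        | cast g => simp [P']
      | cast j =>
        induction g using Fin.lastCases with
        | last => simp [P']
        | cast g => simpa [P'] using hP.1 j g
    · intro g
      induction g using Fin.lastCases with
      | last =>
        rw [Fin.sum_univ_castSucc]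
        simp [P']
      | cast g =>
        rw [Fin.sum_univ_castSucc]
        simpa [P'] using hP.2 g
  have hmem : (⨅ j, (I.extend hn).util i.castSucc (P' j)) ≤ (I.extend hn).MMS i.castSucc :=
    (I.extend hn).le_mms (Nat.succ_pos n) i.castSucc P' hP'
  refine le_trans (le_ciInf fun j' => ?_) hmem
  induction j' using Fin.lastCases with
  | last =>
    have : (I.extend hn).util i.castSucc (P' (Fin.last n)) = I.MMS i := by
      rw [show P' (Fin.last n) = Fin.snoc (fun _ => (0:ℝ)) 1 by simp [P']]
      rw [extend_util_cast_one I hn i _ (by simp)]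
      have : I.util i (fun g => (Fin.snoc (fun _ => (0:ℝ)) 1 : Fin (m+1) → ℝ) g.castSucc) = 0 := by
        rw [util]
        refine Finset.sum_eq_zero fun g _ => ?_
        simp [frUtil_zero']
      rw [this, zero_add]
    rw [this]
    exact I.le_mms hn i P hP
  | cast j =>
    have : (I.extend hn).util i.castSucc (P' j.castSucc) = I.util i (P j) := by
      rw [show P' j.castSucc = Fin.snoc (P j) 0 by simp [P']]
      rw [extend_util_cast I hn i _ (by simp)]
      congr 1
      funext g
      simp
    rw [this]
    exact ciInf_le (Set.Finite.bddBelow (Set.finite_range _)) j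

theorem extend_mms_last : (1 : ℝ) / (n + 1) ≤ (I.extend hn).MMS (Fin.last n) := by
  set Q : Fin (n + 1) → Fin (m + 1) → ℝ :=
    fun j => Fin.snoc (fun _ => if j = Fin.last n then (1:ℝ) else 0) (1 / (n + 1)) with hQdef
  have hn1 : (0:ℝ) < (n:ℝ) + 1 := by positivity
  have hQ : (I.extend hn).IsAllocation Q := by
    constructor
    · intro j g
      induction g using Fin.lastCases with
      | last =>
        simp only [Q, Fin.snoc_last]
        constructor
        · positivity
        · rw [div_le_one hn1]; linarith
      | cast g =>
        simp only [Q, Fin.snoc_castSucc]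
        split_ifs <;> norm_num
    · intro g
      induction g using Fin.lastCases with
      | last =>
        simp only [Q, Fin.snoc_last, Finset.sum_const, Finset.card_univ, Fintype.card_fin,
          nsmul_eq_mul]
        push_cast
        field_simp
      | cast g =>
        simp [Q]
  have hval : ∀ j, (I.extend hn).util (Fin.last n) (Q j) = 1 / (n + 1) := by
    intro j
    rw [extend_util_last I hn]
    simp [Q]
  have : (⨅ j, (I.extend hn).util (Fin.last n) (Q j)) = (1 : ℝ) / (n + 1) := by
    rw [show (fun j => (I.extend hn).util (Fin.last n) (Q j)) = fun _ => (1:ℝ)/(n+1) from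
      funext hval]
    exact ciInf_const
  rw [← this]
  exact (I.extend hn).le_mms (Nat.succ_pos n) (Fin.last n) Q hQ

end FairDivision

/-- If an instance `I` with `n` agents and `m` goods admits no `α`-MMS
allocation for any `α > γ`, then there is an instance `I'` with `n+1` agents and `m+1` goods
admitting no `α`-MMS allocation for any `α > γ`. -/
theorem mms_guarantee_non_increasing (n m : ℕ) (hn : 0 < n) (I : FairDivision n m)
    (γ : ℝ) (hγ : 0 ≤ γ)
    (h : ∀ α : ℝ, γ < α →
      ¬ ∃ x, I.IsAllocation x ∧ ∀ i, α * I.MMS i ≤ I.util i (x i)) :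
    ∃ I' : FairDivision (n + 1) (m + 1),
      ∀ α : ℝ, γ < α →
        ¬ ∃ x, I'.IsAllocation x ∧ ∀ i, α * I'.MMS i ≤ I'.util i (x i) := by
  classical
  refine ⟨I.extend hn, ?_⟩
  rintro α hα ⟨x', ⟨hbd, hsum⟩, hsat⟩
  set E := I.extend hn with hE
  have hα0 : 0 < α := lt_of_le_of_lt hγ hα
  haveI : Nonempty (Fin n) := Fin.pos_iff_nonempty.mp hn
  -- the new agent receives a positive fraction of the new good
  have hnewutil : E.util (Fin.last n) (x' (Fin.last n)) = x' (Fin.last n) (Fin.last m) :=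
    FairDivision.extend_util_last I hn _
  have hnewpos : 0 < x' (Fin.last n) (Fin.last m) := by
    have h1 : α * ((1 : ℝ) / (n + 1)) ≤ α * E.MMS (Fin.last n) :=
      mul_le_mul_of_nonneg_left (FairDivision.extend_mms_last I hn) hα0.le
    have h2 := hsat (Fin.last n)
    rw [hnewutil] at h2
    have h3 : (0:ℝ) < α * ((1:ℝ)/(n+1)) := by positivity
    linarith
  -- two distinct agents' fractions sum to at most 1
  have hpair : ∀ (i : Fin n) (g' : Fin (m + 1)),
      x' i.castSucc g' + x' (Fin.last n) g' ≤ 1 := by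
    intro i g'
    have hne : i.castSucc ≠ Fin.last n := (Fin.castSucc_lt_last i).ne
    have hsub := Finset.sum_le_sum_of_subset_of_nonneg
      (Finset.subset_univ {i.castSucc, Fin.last n})
      (fun j _ _ => (hbd j g').1)
    rw [Finset.sum_pair hne] at hsub
    calc x' i.castSucc g' + x' (Fin.last n) g' ≤ ∑ j, x' j g' := hsub
      _ = 1 := hsum g'
  -- every old agent's fraction of the new good is < 1, so it contributes nothing
  have hlt : ∀ i : Fin n, x' i.castSucc (Fin.last m) ≠ 1 := by
    intro i
    have := hpair i (Fin.last m)
    intro hcontra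
    rw [hcontra] at this
    linarith
  -- old agents are α-MMS on the old goods
  have hu : ∀ i : Fin n, α * I.MMS i ≤ I.util i (fun g => x' i.castSucc g.castSucc) := by
    intro i
    calc α * I.MMS i ≤ α * E.MMS i.castSucc :=
          mul_le_mul_of_nonneg_left (FairDivision.extend_mms_cast I hn i) hα0.le
      _ ≤ E.util i.castSucc (x' i.castSucc) := hsat i.castSucc
      _ = I.util i (fun g => x' i.castSucc g.castSucc) :=
          FairDivision.extend_util_cast I hn i _ (hlt i)
  -- build the allocation for `I`, dumping the new agent's old-good fractions on agent 0
  set i0 : Fin n := ⟨0, hn⟩ with hi0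
  set x : Fin n → Fin m → ℝ := fun i g =>
    if i = i0 then x' i.castSucc g.castSucc + x' (Fin.last n) g.castSucc
    else x' i.castSucc g.castSucc with hx
  have hx1 : ∀ (i : Fin n) (g : Fin m), x i g =
      if i = i0 then x' i.castSucc g.castSucc + x' (Fin.last n) g.castSucc
      else x' i.castSucc g.castSucc := fun i g => rfl
  refine h α hα ⟨x, ⟨⟨?_, ?_⟩, ?_⟩⟩
  · intro i g
    rw [hx1 i g]
    split_ifs with hi
    · exact ⟨add_nonneg (hbd _ _).1 (hbd _ _).1, hpair i g.castSucc⟩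
    · exact ⟨(hbd _ _).1, (hbd _ _).2⟩
  · intro g
    have hsplit : ∀ i : Fin n, x i g = x' i.castSucc g.castSucc +
        (if i = i0 then x' (Fin.last n) g.castSucc else 0) := by
      intro i
      rw [hx1 i g]
      by_cases hi : i = i0 <;> simp [hi]
    calc ∑ i, x i g
        = ∑ i : Fin n, (x' i.castSucc g.castSucc +
            (if i = i0 then x' (Fin.last n) g.castSucc else 0)) :=
          Finset.sum_congr rfl fun i _ => hsplit i
      _ = (∑ i : Fin n, x' i.castSucc g.castSucc) +
            (∑ i : Fin n, if i = i0 then x' (Fin.last n) g.castSucc else 0) :=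
          Finset.sum_add_distrib
      _ = (∑ i : Fin n, x' i.castSucc g.castSucc) + x' (Fin.last n) g.castSucc := by
          have : (∑ i : Fin n, if i = i0 then x' (Fin.last n) g.castSucc else 0)
              = x' (Fin.last n) g.castSucc := by
            rw [Finset.sum_ite_eq' Finset.univ i0 (fun _ => x' (Fin.last n) g.castSucc)]
            simp
          rw [this]
      _ = ∑ j : Fin (n + 1), x' j g.castSucc :=
          (Fin.sum_univ_castSucc (fun j : Fin (n + 1) => x' j g.castSucc)).symm
      _ = 1 := hsum g.castSucc
  · intro i
    by_cases hi : i = i0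
    · have hge : ∀ g, x' i.castSucc g.castSucc ≤ x i g := by
        intro g
        rw [hx1 i g, if_pos hi]
        linarith [(hbd (Fin.last n) g.castSucc).1]
      have hle1 : ∀ g, x i g ≤ 1 := by
        intro g
        rw [hx1 i g, if_pos hi]
        exact hpair i g.castSucc
      exact (hu i).trans (I.util_mono' i hge hle1)
    · have hxe : x i = fun g => x' i.castSucc g.castSucc :=
        funext fun g => by rw [hx1 i g, if_neg hi]
      rw [hxe]
      exact hu i
end

section
/- For every n ≥ 2, there exists an instance with n agents in which MMS_i > 0 for every agent i and every allocation x gives some agent i utility u_i(x_i) ≤ (2/3)·MMS_i. Hence the worst-case MMS approximation guarantee is at most 2/3 for any number n ≥ 2 of agents. -/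
open scoped BigOperators Classical

/-! ### Auxiliary construction for the 2/3 impossibility -/

namespace TwoThirdsHard

open FairDivision

/-- The hard instance: `n` agents, `2n-1` goods, all values `1`; agent `i` regards good
`i` (and only good `i`) as divisible. -/
noncomputable def hardInst (n : ℕ) : FairDivision n (2 * n - 1) where
  v := fun _ _ => 1
  v_nonneg := fun _ _ => zero_le_one
  divisible := fun i g => (g : ℕ) = (i : ℕ)

/-- Rank-`r` non-divisible good for agent `i`. -/
def nu (n : ℕ) (i : Fin n) (r : ℕ) (hr : r ≤ 2 * n - 3) (hn : 2 ≤ n) : Fin (2 * n - 1) :=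
  ⟨if r < (i : ℕ) then r else r + 1, by
    have := i.isLt; split <;> omega⟩

lemma nu_ne (n : ℕ) (i : Fin n) (r : ℕ) (hr : r ≤ 2 * n - 3) (hn : 2 ≤ n) :
    ((nu n i r hr hn : Fin (2 * n - 1)) : ℕ) ≠ (i : ℕ) := by
  unfold nu; split <;> simp <;> omega

/-- Part index of good `g` (for `g ≠ i`). -/
def pt (n : ℕ) (i : Fin n) (g : ℕ) : ℕ :=
  if (if g < (i : ℕ) then g else g - 1) = 2 * n - 3 then n - 1
  else (if g < (i : ℕ) then g else g - 1) / 2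

lemma pt_lt (n : ℕ) (i : Fin n) (g : Fin (2 * n - 1)) (hn : 2 ≤ n) : pt n i (g : ℕ) < n := by
  unfold pt
  have h1 := g.isLt
  have h2 := i.isLt
  split_ifs <;> omega

lemma pt_nu (n : ℕ) (i : Fin n) (r : ℕ) (hr : r ≤ 2 * n - 3) (hn : 2 ≤ n) :
    pt n i ((nu n i r hr hn : Fin (2 * n - 1)) : ℕ)
      = if r = 2 * n - 3 then n - 1 else r / 2 := by
  have h2 := i.isLt
  unfold pt nu
  simp only
  split_ifs <;> omega

/-- The MMS witness partition for agent `i`. -/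
noncomputable def Pw (n : ℕ) (i : Fin n) : Fin n → Fin (2 * n - 1) → ℝ := fun j g =>
  if (g : ℕ) = (i : ℕ) then
    (if (j : ℕ) = n - 2 ∨ (j : ℕ) = n - 1 then 1 / 2 else 0)
  else
    (if (j : ℕ) = pt n i (g : ℕ) then 1 else 0)

lemma Pw_alloc (n : ℕ) (hn : 2 ≤ n) (i : Fin n) : (hardInst n).IsAllocation (Pw n i) := by
  constructor
  · intro j g
    unfold Pw
    split <;> split <;> norm_num
  · intro g
    unfold Pw
    by_cases hg : (g : ℕ) = (i : ℕ)
    · simp only [hg, if_pos rfl, if_true]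
      have key : ∀ j : Fin n,
          (if (j : ℕ) = n - 2 ∨ (j : ℕ) = n - 1 then (1 / 2 : ℝ) else 0)
            = (if j = (⟨n - 2, by omega⟩ : Fin n) then (1 / 2 : ℝ) else 0)
              + (if j = (⟨n - 1, by omega⟩ : Fin n) then (1 / 2 : ℝ) else 0) := by
        intro j
        by_cases hA : (j : ℕ) = n - 2 <;> by_cases hB : (j : ℕ) = n - 1
        · exfalso; omega
        · simp [Fin.ext_iff, hA, hB]
          omega
        · simp [Fin.ext_iff, hA, hB]
          omega
        · simp [Fin.ext_iff, hA, hB]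
      rw [Finset.sum_congr rfl (fun j _ => key j), Finset.sum_add_distrib,
        Finset.sum_ite_eq' Finset.univ, Finset.sum_ite_eq' Finset.univ]
      simp; norm_num
    · simp only [hg, if_neg hg, if_false]
      have key : ∀ j : Fin n,
          (if (j : ℕ) = pt n i (g : ℕ) then (1 : ℝ) else 0)
            = (if j = (⟨pt n i (g : ℕ), pt_lt n i g hn⟩ : Fin n) then (1 : ℝ) else 0) := by
        intro j; simp only [Fin.ext_iff]
      rw [Finset.sum_congr rfl (fun j _ => key j), Finset.sum_ite_eq' Finset.univ]
      simp

lemma frUtil_Pw_nonneg (n : ℕ) (hn : 2 ≤ n) (i : Fin n) (j : Fin n) (g : Fin (2 * n - 1)) :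
    0 ≤ (hardInst n).frUtil i g (Pw n i j g) := by
  unfold frUtil hardInst Pw
  simp only
  split_ifs <;> norm_num

lemma Pw_util (n : ℕ) (hn : 2 ≤ n) (i : Fin n) (j : Fin n) :
    (3 / 2 : ℝ) ≤ (hardInst n).util i (Pw n i j) := by
  have hnn : ∀ g ∈ Finset.univ, (0 : ℝ) ≤ (hardInst n).frUtil i g (Pw n i j g) :=
    fun g _ => frUtil_Pw_nonneg n hn i j g
  -- the divisible goods' frUtil at a point
  have hi_lt : (i : ℕ) < 2 * n - 1 := by have := i.isLt; omega
  set gi : Fin (2 * n - 1) := ⟨(i : ℕ), hi_lt⟩ with hgi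
  have hgi_val : ((gi : Fin (2 * n - 1)) : ℕ) = (i : ℕ) := rfl
  have hj := j.isLt
  rcases (by omega : (j : ℕ) = n - 1 ∨ (j : ℕ) = n - 2 ∨ (j : ℕ) < n - 2) with hj1 | hj2 | hj3
  · -- part n-1 : good nu(2n-3) + half of good i
    set a : Fin (2 * n - 1) := nu n i (2 * n - 3) (le_refl _) hn with ha
    have hane : (a : ℕ) ≠ (i : ℕ) := nu_ne n i _ _ hn
    have hagi : a ≠ gi := by
      intro h; apply hane; rw [h]
    have hsub : ({a, gi} : Finset (Fin (2 * n - 1))) ⊆ Finset.univ := Finset.subset_univ _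
    have hle := Finset.sum_le_sum_of_subset_of_nonneg hsub
      (fun g _ _ => frUtil_Pw_nonneg n hn i j g)
    rw [Finset.sum_pair hagi] at hle
    refine le_trans ?_ hle
    have hPa : Pw n i j a = 1 := by
      unfold Pw
      rw [if_neg hane, pt_nu, if_pos rfl, if_pos hj1]
    have hPgi : Pw n i j gi = 1 / 2 := by
      unfold Pw
      rw [if_pos hgi_val, if_pos (Or.inr hj1)]
    have hfa : (hardInst n).frUtil i a (Pw n i j a) = 1 := by
      rw [hPa]; unfold frUtil hardInst; simp [hane]
    have hfgi : (hardInst n).frUtil i gi (Pw n i j gi) = 1 / 2 := by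
      rw [hPgi]; unfold frUtil hardInst; simp [hgi_val]
    rw [hfa, hfgi]; norm_num
  · -- part n-2 : good nu(2n-4) + half of good i
    set a : Fin (2 * n - 1) := nu n i (2 * n - 4) (by omega) hn with ha
    have hane : (a : ℕ) ≠ (i : ℕ) := nu_ne n i _ _ hn
    have hagi : a ≠ gi := by intro h; apply hane; rw [h]
    have hle := Finset.sum_le_sum_of_subset_of_nonneg (Finset.subset_univ {a, gi})
      (fun g _ _ => frUtil_Pw_nonneg n hn i j g)
    rw [Finset.sum_pair hagi] at hle
    refine le_trans ?_ hle
    have h23 : ¬(2 * n - 4 = 2 * n - 3) := by omega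
    have hjd : (j : ℕ) = (2 * n - 4) / 2 := by omega
    have hPa : Pw n i j a = 1 := by
      unfold Pw
      rw [if_neg hane, pt_nu, if_neg h23, if_pos hjd]
    have hPgi : Pw n i j gi = 1 / 2 := by
      unfold Pw
      rw [if_pos hgi_val, if_pos (Or.inl hj2)]
    have hfa : (hardInst n).frUtil i a (Pw n i j a) = 1 := by
      rw [hPa]; unfold frUtil hardInst; simp [hane]
    have hfgi : (hardInst n).frUtil i gi (Pw n i j gi) = 1 / 2 := by
      rw [hPgi]; unfold frUtil hardInst; simp [hgi_val]
    rw [hfa, hfgi]; norm_num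
  · -- part j < n-2 : goods nu(2j), nu(2j+1)
    set a : Fin (2 * n - 1) := nu n i (2 * (j : ℕ)) (by omega) hn with ha
    set b : Fin (2 * n - 1) := nu n i (2 * (j : ℕ) + 1) (by omega) hn with hb
    have hane : (a : ℕ) ≠ (i : ℕ) := nu_ne n i _ _ hn
    have hbne : (b : ℕ) ≠ (i : ℕ) := nu_ne n i _ _ hn
    have hab : a ≠ b := by
      have hav : ((a : Fin (2 * n - 1)) : ℕ)
          = (if 2 * (j : ℕ) < (i : ℕ) then 2 * (j : ℕ) else 2 * (j : ℕ) + 1) := rfl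
      have hbv : ((b : Fin (2 * n - 1)) : ℕ)
          = (if 2 * (j : ℕ) + 1 < (i : ℕ) then 2 * (j : ℕ) + 1 else 2 * (j : ℕ) + 1 + 1) := rfl
      intro h
      rw [h, hbv] at hav
      split_ifs at hav <;> omega
    have hle := Finset.sum_le_sum_of_subset_of_nonneg (Finset.subset_univ {a, b})
      (fun g _ _ => frUtil_Pw_nonneg n hn i j g)
    rw [Finset.sum_pair hab] at hle
    refine le_trans ?_ hle
    have ha1 : ¬(2 * (j : ℕ) = 2 * n - 3) := by omega
    have ha2 : (j : ℕ) = 2 * (j : ℕ) / 2 := by omega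
    have hb1 : ¬(2 * (j : ℕ) + 1 = 2 * n - 3) := by omega
    have hb2 : (j : ℕ) = (2 * (j : ℕ) + 1) / 2 := by omega
    have hPa : Pw n i j a = 1 := by
      unfold Pw
      rw [if_neg hane, pt_nu, if_neg ha1, if_pos ha2]
    have hPb : Pw n i j b = 1 := by
      unfold Pw
      rw [if_neg hbne, pt_nu, if_neg hb1, if_pos hb2]
    have hfa : (hardInst n).frUtil i a (Pw n i j a) = 1 := by
      rw [hPa]; unfold frUtil hardInst; simp [hane]
    have hfb : (hardInst n).frUtil i b (Pw n i j b) = 1 := by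
      rw [hPb]; unfold frUtil hardInst; simp [hbne]
    rw [hfa, hfb]; norm_num

/-- Utility is at most the number of goods, for any bundle with entries in `[0,1]`. -/
lemma util_le_card (n : ℕ) (i : Fin n) (b : Fin (2 * n - 1) → ℝ)
    (hb : ∀ g, 0 ≤ b g ∧ b g ≤ 1) :
    (hardInst n).util i b ≤ (2 * n - 1 : ℕ) := by
  unfold util
  calc ∑ g, (hardInst n).frUtil i g (b g) ≤ ∑ _g : Fin (2 * n - 1), (1 : ℝ) := by
        apply Finset.sum_le_sum
        intro g _
        unfold frUtil hardInst
        simp only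
        split_ifs with h1 h2
        · have := (hb g).1; have := (hb g).2; nlinarith
        · exact le_refl 1
        · exact zero_le_one
    _ = (2 * n - 1 : ℕ) := by simp

lemma mms_ge (n : ℕ) (hn : 2 ≤ n) (i : Fin n) : (3 / 2 : ℝ) ≤ (hardInst n).MMS i := by
  have hne : Nonempty (Fin n) := ⟨⟨0, by omega⟩⟩
  have hbdd : BddAbove { r : ℝ | ∃ P : Fin n → Fin (2 * n - 1) → ℝ,
      (hardInst n).IsAllocation P ∧ r = ⨅ j, (hardInst n).util i (P j) } := by
    refine ⟨(2 * n - 1 : ℕ), ?_⟩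
    rintro r ⟨P, hP, rfl⟩
    have hlow : BddBelow (Set.range fun j => (hardInst n).util i (P j)) :=
      Set.Finite.bddBelow (Set.finite_range _)
    refine le_trans (ciInf_le hlow ⟨0, by omega⟩) ?_
    exact util_le_card n i _ (fun g => hP.1 _ g)
  have hmem : (⨅ j, (hardInst n).util i (Pw n i j)) ∈ { r : ℝ | ∃ P : Fin n → Fin (2 * n - 1) → ℝ,
      (hardInst n).IsAllocation P ∧ r = ⨅ j, (hardInst n).util i (P j) } :=
    ⟨Pw n i, Pw_alloc n hn i, rfl⟩
  refine le_trans ?_ (le_csSup hbdd hmem)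
  exact le_ciInf (fun j => Pw_util n hn i j)

lemma punish (n : ℕ) (hn : 2 ≤ n) (x : Fin n → Fin (2 * n - 1) → ℝ)
    (hx : (hardInst n).IsAllocation x) : ∃ i, (hardInst n).util i (x i) ≤ 1 := by
  by_contra hcon
  push_neg at hcon
  classical
  set χ : Fin n → Fin (2 * n - 1) → ℕ :=
    fun i g => if x i g = 1 ∨ ((g : ℕ) = (i : ℕ) ∧ 0 < x i g) then 1 else 0 with hχ
  -- at most one agent claims each good
  have hcol : ∀ g, ∑ i, χ i g ≤ 1 := by
    intro g
    by_cases hex : ∃ i0, χ i0 g = 1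
    · obtain ⟨i0, hi0⟩ := hex
      have hclaim0 : x i0 g = 1 ∨ ((g : ℕ) = (i0 : ℕ) ∧ 0 < x i0 g) := by
        by_contra hc; simp only [hχ, if_neg hc] at hi0; exact absurd hi0 (by omega)
      have hsum : ∑ i', x i' g = 1 := hx.2 g
      have : ∑ i, χ i g = χ i0 g := by
        apply Finset.sum_eq_single_of_mem i0 (Finset.mem_univ _)
        intro b _ hb
        have hadd : x b g + x i0 g ≤ 1 := by
          have hsub : ({b, i0} : Finset (Fin n)) ⊆ Finset.univ := Finset.subset_univ _
          have := Finset.sum_le_sum_of_subset_of_nonneg hsub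
            (fun i' _ _ => (hx.1 i' g).1)
          rw [Finset.sum_pair hb] at this
          rw [hsum] at this; exact this
        have hbnn := (hx.1 b g).1
        have hi0nn := (hx.1 i0 g).1
        simp only [hχ]
        rw [if_neg]
        rintro (h1 | ⟨h2, h3⟩)
        · rcases hclaim0 with h4 | ⟨h5, h6⟩ <;> nlinarith
        · rcases hclaim0 with h4 | ⟨h5, h6⟩
          · nlinarith
          · exact hb (Fin.ext (by omega))
      rw [this, hi0]
    · push_neg at hex
      have : ∀ i ∈ Finset.univ, χ i g = 0 := by
        intro i _
        have hne := hex i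
        by_cases hcl : x i g = 1 ∨ ((g : ℕ) = (i : ℕ) ∧ 0 < x i g)
        · exact absurd (if_pos hcl) hne
        · exact if_neg hcl
      rw [Finset.sum_congr rfl this]
      simp
  -- each agent's utility is at most its number of claims
  have hrow : ∀ i, (hardInst n).util i (x i) ≤ ((∑ g, χ i g : ℕ) : ℝ) := by
    intro i
    unfold util
    push_cast
    apply Finset.sum_le_sum
    intro g _
    have h0 := (hx.1 i g).1
    have h1 := (hx.1 i g).2
    unfold frUtil hardInst
    simp only
    by_cases hd : (g : ℕ) = (i : ℕ)
    · rw [if_pos hd]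
      by_cases hp : 0 < x i g
      · have hc : χ i g = 1 := if_pos (Or.inr ⟨hd, hp⟩)
        rw [hc]; push_cast; linarith
      · have hz : x i g = 0 := le_antisymm (not_lt.mp hp) h0
        rw [hz]; simp
    · rw [if_neg hd]
      by_cases hq : x i g = 1
      · rw [if_pos hq]
        have hc : χ i g = 1 := if_pos (Or.inl hq)
        rw [hc]; push_cast; norm_num
      · rw [if_neg hq]
        exact Nat.cast_nonneg _
  -- each agent claims at least two goods
  have h2 : ∀ i, 2 ≤ ∑ g, χ i g := by
    intro i
    have hu := hcon i
    have := lt_of_lt_of_le hu (hrow i)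
    have : (1 : ℕ) < ∑ g, χ i g := by exact_mod_cast this
    omega
  have hbig : 2 * n ≤ ∑ i, ∑ g, χ i g := by
    calc 2 * n = ∑ _i : Fin n, 2 := by simp [Finset.sum_const, Finset.card_univ, mul_comm]
      _ ≤ ∑ i, ∑ g, χ i g := Finset.sum_le_sum (fun i _ => h2 i)
  have hsmall : ∑ i, ∑ g, χ i g ≤ 2 * n - 1 := by
    rw [Finset.sum_comm]
    calc ∑ g : Fin (2 * n - 1), ∑ i, χ i g ≤ ∑ _g : Fin (2 * n - 1), 1 :=
          Finset.sum_le_sum (fun g _ => hcol g)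
      _ = 2 * n - 1 := by simp
  omega

end TwoThirdsHard

/-- For every `n ≥ 2` there is an `n`-agent instance with positive maximin
shares in which every allocation gives some agent at most `(2/3) * MMS_i`. -/
theorem n_agent_mms_at_most_two_thirds (n : ℕ) (hn : 2 ≤ n) :
    ∃ (m : ℕ) (I : FairDivision n m),
      (∀ i, 0 < I.MMS i) ∧
      ∀ x, I.IsAllocation x → ∃ i, I.util i (x i) ≤ 2 / 3 * I.MMS i := by
  refine ⟨2 * n - 1, TwoThirdsHard.hardInst n, ?_, ?_⟩
  · intro i
    have := TwoThirdsHard.mms_ge n hn i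
    linarith
  · intro x hx
    obtain ⟨i, hi⟩ := TwoThirdsHard.punish n hn x hx
    refine ⟨i, hi.trans ?_⟩
    have := TwoThirdsHard.mms_ge n hn i
    linarith
end
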